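/- For all t > 0, s > 0 and all x, y ∈ ℝ², the Mehler kernel satisfies the Chapman–Kolmogorov (semigroup) identity ∫_{ℝ²} K(t,x,z) K(s,z,y) dz = K(t+s, x, y), the integral being absolutely convergent. -/

import Mathlib

open MeasureTheory Real Set

/-- The Mehler kernel `K(t,x,y)` of the Landau Hamiltonian with constant magnetic field `B₀`. -/
noncomputable def mehlerK (B₀ t : ℝ) (x y : ℝ × ℝ) : ℂ :=
  ((B₀ / (4 * Real.pi * Real.sinh (B₀ * t)) : ℝ) : ℂ) *
    Complex.exp
      (-(((B₀ * ((x.1 - y.1) ^ 2 + (x.2 - y.2) ^ 2) / (4 * Real.tanh (B₀ * t))) : ℝ) : ℂ)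
        - Complex.I * ((B₀ / 2 : ℝ) : ℂ) * (((x.1 * y.2 - x.2 * y.1) : ℝ) : ℂ))

/-!
In the plane, `K(t, x, ·) K(s, ·, y)` is a Gaussian with quadratic part `-(α_t + α_s) |z|²`,
where `α_t = B₀ coth(B₀ t) / 4`, and linear part in `z`, since the magnetic phases
`x ∧ z + z ∧ y` are linear in `z`. Completing the square gives a kernel of the same shape with
width `(α_t α_s + B₀² / 16) / (α_t + α_s)`, which is `α_{t+s}` by the addition formula for
`coth`; the prefactors combine through `sinh a sinh b (coth a + coth b) = sinh (a + b)`.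
-/

namespace Real

theorem inv_tanh_add_inv_tanh {a b : ℝ} (ha : a ≠ 0) (hb : b ≠ 0) :
    (tanh a)⁻¹ + (tanh b)⁻¹ = sinh (a + b) / (sinh a * sinh b) := by
  have := sinh_ne_zero.2 ha
  have := sinh_ne_zero.2 hb
  rw [tanh_eq_sinh_div_cosh, tanh_eq_sinh_div_cosh, sinh_add]
  field_simp
  ring

theorem inv_tanh_add {a b : ℝ} (ha : a ≠ 0) (hb : b ≠ 0) :
    (tanh (a + b))⁻¹ =
      ((tanh a)⁻¹ * (tanh b)⁻¹ + 1) / ((tanh a)⁻¹ + (tanh b)⁻¹) := by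
  have := sinh_ne_zero.2 ha
  have := sinh_ne_zero.2 hb
  rw [inv_tanh_add_inv_tanh ha hb, tanh_eq_sinh_div_cosh, tanh_eq_sinh_div_cosh,
    tanh_eq_sinh_div_cosh, cosh_add]
  field_simp

theorem div_tanh_mul_pos {c t : ℝ} (hc : c ≠ 0) (ht : 0 < t) : 0 < c / tanh (c * t) := by
  rw [tanh_eq_sinh_div_cosh, div_div_eq_mul_div]
  rcases hc.lt_or_gt with hc | hc
  · exact div_pos_of_neg_of_neg (mul_neg_of_neg_of_pos hc (cosh_pos _))
      (sinh_neg_iff.2 (mul_neg_of_neg_of_pos hc ht))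
  · exact div_pos (mul_pos hc (cosh_pos _)) (sinh_pos_iff.2 (mul_pos hc ht))

end Real

section

open Complex

theorem integral_cexp_quadratic_mul_cexp_quadratic {b : ℂ} (hb : 0 < b.re)
    (c₁ c₂ d₁ d₂ : ℂ) :
    ∫ z : ℝ × ℝ, cexp (-b * z.1 ^ 2 + c₁ * z.1 + d₁) *
        cexp (-b * z.2 ^ 2 + c₂ * z.2 + d₂) =
      π / b * cexp ((c₁ ^ 2 + c₂ ^ 2) / (4 * b) + d₁ + d₂) := by
  have hb' : (-b).re < 0 := by simpa using hb
  have hsqrt : (π / b) ^ (1 / 2 : ℂ) * (π / b) ^ (1 / 2 : ℂ) = π / b := by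
    rw [← cpow_add _ _
      (div_ne_zero (by exact_mod_cast pi_ne_zero) (by rintro rfl; simp at hb))]
    norm_num
  rw [Measure.volume_eq_prod, integral_prod_mul (fun u : ℝ => cexp (-b * u ^ 2 + c₁ * u + d₁))
      (fun u : ℝ => cexp (-b * u ^ 2 + c₂ * u + d₂)), integral_cexp_quadratic hb',
    integral_cexp_quadratic hb', neg_neg, mul_mul_mul_comm, hsqrt, ← Complex.exp_add]
  congr 2
  ring

noncomputable def magneticGaussian (a γ : ℂ) (x y : ℝ × ℝ) : ℂ :=
  cexp (-a * (((x.1 - y.1) ^ 2 + (x.2 - y.2) ^ 2 : ℝ) : ℂ) -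
    I * γ * ((x.1 * y.2 - x.2 * y.1 : ℝ) : ℂ))

theorem magneticGaussian_mul_magneticGaussian (a b γ : ℂ) (x y z : ℝ × ℝ) :
    magneticGaussian a γ x z * magneticGaussian b γ z y =
      cexp (-(a + b) * z.1 ^ 2 + (2 * a * x.1 + 2 * b * y.1 + I * γ * (x.2 - y.2)) * z.1
          + (-a * x.1 ^ 2 - b * y.1 ^ 2)) *
        cexp (-(a + b) * z.2 ^ 2
          + (2 * a * x.2 + 2 * b * y.2 - I * γ * (x.1 - y.1)) * z.2
          + (-a * x.2 ^ 2 - b * y.2 ^ 2)) := by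
  rw [magneticGaussian, magneticGaussian, ← Complex.exp_add, ← Complex.exp_add]
  push_cast
  ring_nf

theorem magneticGaussian_chapman_kolmogorov {a b : ℂ} (hab : 0 < (a + b).re) (γ : ℂ)
    (x y : ℝ × ℝ) :
    Integrable (fun z => magneticGaussian a γ x z * magneticGaussian b γ z y) ∧
    ∫ z, magneticGaussian a γ x z * magneticGaussian b γ z y =
      π / (a + b) * magneticGaussian ((a * b + γ ^ 2 / 4) / (a + b)) γ x y := by
  have hab' : a + b ≠ 0 := by rintro h; simp [h] at hab
  simp_rw [magneticGaussian_mul_magneticGaussian]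
  constructor
  · rw [Measure.volume_eq_prod]
    exact (integrable_cexp_quadratic hab _ _).mul_prod (integrable_cexp_quadratic hab _ _)
  · rw [integral_cexp_quadratic_mul_cexp_quadratic hab, magneticGaussian]
    congr 2
    push_cast
    field_simp
    linear_combination γ ^ 2 * (((x.1 : ℂ) - y.1) ^ 2 + ((x.2 : ℂ) - y.2) ^ 2) * I_sq

end

noncomputable def mehlerAmplitude (B₀ t : ℝ) : ℝ := B₀ / (4 * π * sinh (B₀ * t))

noncomputable def mehlerWidth (B₀ t : ℝ) : ℝ := B₀ / (4 * tanh (B₀ * t))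

theorem mehlerK_eq_mehlerAmplitude_mul (B₀ t : ℝ) (x y : ℝ × ℝ) :
    mehlerK B₀ t x y = mehlerAmplitude B₀ t *
      magneticGaussian (mehlerWidth B₀ t) ((B₀ / 2 : ℝ) : ℂ) x y := by
  rw [mehlerK, mehlerAmplitude, mehlerWidth, magneticGaussian]
  congr 2
  push_cast
  ring

theorem mehlerWidth_eq_mul_inv_tanh (B₀ t : ℝ) :
    mehlerWidth B₀ t = B₀ / 4 * (tanh (B₀ * t))⁻¹ := by
  rw [mehlerWidth, div_mul_eq_div_div, div_eq_mul_inv]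

theorem mehlerWidth_pos {B₀ t : ℝ} (hB : B₀ ≠ 0) (ht : 0 < t) : 0 < mehlerWidth B₀ t := by
  rw [mehlerWidth, mul_comm, ← div_div]
  exact div_pos (div_tanh_mul_pos hB ht) four_pos

theorem mehlerWidth_add_mehlerWidth {B₀ t s : ℝ} (hB : B₀ ≠ 0) (ht : t ≠ 0)
    (hs : s ≠ 0) :
    mehlerWidth B₀ t + mehlerWidth B₀ s =
      B₀ / 4 * (sinh (B₀ * (t + s)) / (sinh (B₀ * t) * sinh (B₀ * s))) := by
  rw [mehlerWidth_eq_mul_inv_tanh, mehlerWidth_eq_mul_inv_tanh, ← mul_add, mul_add B₀,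
    inv_tanh_add_inv_tanh (mul_ne_zero hB ht) (mul_ne_zero hB hs)]

theorem mehlerAmplitude_add {B₀ t s : ℝ} (hB : B₀ ≠ 0) (ht : t ≠ 0) (hs : s ≠ 0) :
    mehlerAmplitude B₀ (t + s) =
      mehlerAmplitude B₀ t * mehlerAmplitude B₀ s *
        (π / (mehlerWidth B₀ t + mehlerWidth B₀ s)) := by
  have := sinh_ne_zero.2 (mul_ne_zero hB ht)
  have := sinh_ne_zero.2 (mul_ne_zero hB hs)
  rw [mehlerWidth_add_mehlerWidth hB ht hs, mehlerAmplitude, mehlerAmplitude, mehlerAmplitude]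
  field_simp

theorem mehlerWidth_add {B₀ t s : ℝ} (hB : B₀ ≠ 0) (ht : t ≠ 0) (hs : s ≠ 0) :
    mehlerWidth B₀ (t + s) = (mehlerWidth B₀ t * mehlerWidth B₀ s + (B₀ / 2) ^ 2 / 4) /
      (mehlerWidth B₀ t + mehlerWidth B₀ s) := by
  simp only [mehlerWidth_eq_mul_inv_tanh, mul_add,
    inv_tanh_add (mul_ne_zero hB ht) (mul_ne_zero hB hs)]
  field_simp
  ring

theorem mehlerK_chapman_kolmogorov_general (B₀ : ℝ) (t s : ℝ) (ht : 0 < t) (hs : 0 < s)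
    (x y : ℝ × ℝ) :
    Integrable (fun z : ℝ × ℝ => mehlerK B₀ t x z * mehlerK B₀ s z y) volume ∧
    ∫ z : ℝ × ℝ, mehlerK B₀ t x z * mehlerK B₀ s z y = mehlerK B₀ (t + s) x y := by
  rcases eq_or_ne B₀ 0 with rfl | hB
  · simp [mehlerK]
  have hwidth : 0 < ((mehlerWidth B₀ t : ℂ) + mehlerWidth B₀ s).re := by
    simpa using add_pos (mehlerWidth_pos hB ht) (mehlerWidth_pos hB hs)
  obtain ⟨hint, hval⟩ := magneticGaussian_chapman_kolmogorov hwidth ((B₀ / 2 : ℝ) : ℂ) x y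
  simp_rw [mehlerK_eq_mehlerAmplitude_mul, mul_mul_mul_comm (mehlerAmplitude B₀ t : ℂ)]
  refine ⟨hint.const_mul _, ?_⟩
  rw [integral_const_mul, hval, mehlerWidth_add hB ht.ne' hs.ne',
    mehlerAmplitude_add hB ht.ne' hs.ne']
  push_cast
  ring

/-- **Chapman–Kolmogorov (semigroup) identity for the Mehler kernel.** For `B₀ > 0`, all
`t, s > 0` and `x, y ∈ ℝ²`, `∫_{ℝ²} K(t,x,z) K(s,z,y) dz = K(t+s,x,y)`, the integral being
absolutely convergent. -/
theorem mehlerK_chapman_kolmogorov (B₀ : ℝ) (hB : 0 < B₀) (t s : ℝ) (ht : 0 < t) (hs : 0 < s)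
    (x y : ℝ × ℝ) :
    Integrable (fun z : ℝ × ℝ => mehlerK B₀ t x z * mehlerK B₀ s z y) volume ∧
    ∫ z : ℝ × ℝ, mehlerK B₀ t x z * mehlerK B₀ s z y = mehlerK B₀ (t + s) x y :=
  mehlerK_chapman_kolmogorov_general B₀ t s ht hs x y
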